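/- Let m ≥ 2, let K ≠ 2^[m] be a simplicial complex on [m], and let i ≠ j be elements of [m] with {i,j} ∈ K and {i',j'} ∈ K∨ (i.e., [m]∖{i,j} ∉ K). Then the full subcomplex of Bier(K) on the 4-element set S = {i, j, i', j'} is the 4-cycle with edge set {{i,j}, {j,i'}, {i',j'}, {j',i}}: its faces are exactly ∅, the four singletons of S, and these four 2-element sets. -/

import Mathlib

open Classical

def IsComplex {V : Type*} (K : Set (Finset V)) : Prop :=
  ∅ ∈ K ∧ ∀ σ ∈ K, ∀ τ ⊆ σ, τ ∈ K

def dual {m : ℕ} (K : Set (Finset (Fin m))) : Set (Finset (Fin m)) :=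
  {σ | σᶜ ∉ K}

def inlEmb (m : ℕ) : Fin m ↪ (Fin m ⊕ Fin m) := Function.Embedding.inl

def inrEmb (m : ℕ) : Fin m ↪ (Fin m ⊕ Fin m) := Function.Embedding.inr

/-- The Bier sphere of `K`: faces are `I ∪ J'` with `I ∈ K`, `J ∈ K∨`, `I ∩ J = ∅`,
where the first summand of `Fin m ⊕ Fin m` is `[m]` and the second is the primed copy `[m']`. -/
def bier {m : ℕ} (K : Set (Finset (Fin m))) : Set (Finset (Fin m ⊕ Fin m)) :=
  {τ | ∃ I ∈ K, ∃ J ∈ dual K, Disjoint I J ∧ τ = I.map (inlEmb m) ∪ J.map (inrEmb m)}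

def IsMinNonFace {V : Type*} (K : Set (Finset V)) (σ : Finset V) : Prop :=
  σ ∉ K ∧ ∀ τ ⊂ σ, τ ∈ K

def IsFlag {V : Type*} (K : Set (Finset V)) : Prop :=
  ∀ σ, IsMinNonFace K σ → σ.card ≤ 2

def IsFacet {V : Type*} (K : Set (Finset V)) (σ : Finset V) : Prop :=
  σ ∈ K ∧ ∀ τ ∈ K, σ ⊆ τ → σ = τ


/-! The four vertices `i, j, i', j'` lie in the face `{i, j, i', j'}` of the join `K * K∨`, and
inside a face of the join the only condition left for membership in `Bier(K)` is that the unprimed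
and primed parts be disjoint. Among the subsets of `{i, j, i', j'}` this excludes exactly those
containing `{i, i'}` or `{j, j'}`, which leaves the 4-cycle `i – j – i' – j' – i`. -/

theorem Finset.subset_pair_iff_eq {α : Type*} [DecidableEq α] {s : Finset α} {a b : α} :
    s ⊆ {a, b} ↔ s = ∅ ∨ s = {a} ∨ s = {b} ∨ s = {a, b} := by
  rw [← Finset.coe_subset, Finset.coe_pair, Set.subset_pair_iff_eq]
  norm_cast

theorem Finset.pair_disjSum_pair {α : Type*} [DecidableEq α] (a b : α) :
    ({a, b} : Finset α).disjSum {a, b} = {.inl a, .inl b, .inr a, .inr b} := by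
  ext (x | x) <;> simp

theorem disjoint_toLeft_toRight_and_subset_iff {α : Type*} [DecidableEq α] {a b : α}
    (hab : a ≠ b) (τ : Finset (α ⊕ α)) :
    (Disjoint τ.toLeft τ.toRight ∧ τ ⊆ {.inl a, .inl b, .inr a, .inr b}) ↔
      (τ = ∅ ∨
       τ = {.inl a} ∨ τ = {.inl b} ∨ τ = {.inr a} ∨ τ = {.inr b} ∨
       τ = {.inl a, .inl b} ∨ τ = {.inl b, .inr a} ∨
       τ = {.inr a, .inr b} ∨ τ = {.inr b, .inl a}) := by
  constructor
  · rintro ⟨hLR, hτ⟩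
    obtain ⟨hL, hR⟩ := Finset.subset_disjSum.mp (Finset.pair_disjSum_pair a b ▸ hτ)
    rw [← Finset.toLeft_disjSum_toRight (u := τ)]
    rcases Finset.subset_pair_iff_eq.mp hL with hL | hL | hL | hL <;>
      rcases Finset.subset_pair_iff_eq.mp hR with hR | hR | hR | hR <;>
      simp [hL, hR] at hLR <;>
      simp [hL, hR, Finset.ext_iff, hab, hab.symm]
  · rintro (rfl | rfl | rfl | rfl | rfl | rfl | rfl | rfl | rfl) <;>
      simp [Finset.disjoint_left, Finset.insert_subset_iff, hab, hab.symm]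

theorem IsComplex.mem_dual_of_subset {m : ℕ} {K : Set (Finset (Fin m))} (hK : IsComplex K)
    {σ τ : Finset (Fin m)} (hσ : σ ∈ dual K) (hτσ : τ ⊆ σ) : τ ∈ dual K :=
  fun hτ => hσ (hK.2 _ hτ _ (Finset.compl_subset_compl.mpr hτσ))

theorem map_inlEmb_union_map_inrEmb {m : ℕ} (I J : Finset (Fin m)) :
    I.map (inlEmb m) ∪ J.map (inrEmb m) = I.disjSum J := by
  rw [← Finset.map_inl_disjUnion_map_inr, Finset.disjUnion_eq_union]
  rfl

theorem mem_bier_iff {m : ℕ} {K : Set (Finset (Fin m))} {τ : Finset (Fin m ⊕ Fin m)} :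
    τ ∈ bier K ↔ τ.toLeft ∈ K ∧ τ.toRight ∈ dual K ∧ Disjoint τ.toLeft τ.toRight := by
  simp only [bier, Set.mem_ofPred_eq, map_inlEmb_union_map_inrEmb, Finset.eq_disjSum_iff]
  constructor
  · rintro ⟨I, hI, J, hJ, hIJ, rfl, rfl⟩
    exact ⟨hI, hJ, hIJ⟩
  · rintro ⟨hL, hR, hLR⟩
    exact ⟨_, hL, _, hR, hLR, rfl, rfl⟩

theorem mem_bier_iff_disjoint_of_subset_disjSum {m : ℕ} {K : Set (Finset (Fin m))}
    (hK : IsComplex K) {A B : Finset (Fin m)} (hA : A ∈ K) (hB : B ∈ dual K)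
    {τ : Finset (Fin m ⊕ Fin m)} (hτ : τ ⊆ A.disjSum B) :
    τ ∈ bier K ↔ Disjoint τ.toLeft τ.toRight := by
  obtain ⟨hL, hR⟩ := Finset.subset_disjSum.mp hτ
  rw [mem_bier_iff]
  exact ⟨fun h => h.2.2, fun h => ⟨hK.2 _ hA _ hL, hK.mem_dual_of_subset hB hR, h⟩⟩

theorem bier_full_subcomplex_four_cycle_general {m : ℕ}
    (K : Set (Finset (Fin m))) (hK : IsComplex K)
    (i j : Fin m) (hij : i ≠ j)
    (hedge : ({i, j} : Finset (Fin m)) ∈ K)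
    (hdualedge : ({i, j} : Finset (Fin m))ᶜ ∉ K) :
    ∀ τ : Finset (Fin m ⊕ Fin m),
      (τ ∈ bier K ∧ τ ⊆ {Sum.inl i, Sum.inl j, Sum.inr i, Sum.inr j}) ↔
      (τ = ∅ ∨
       τ = {Sum.inl i} ∨ τ = {Sum.inl j} ∨ τ = {Sum.inr i} ∨ τ = {Sum.inr j} ∨
       τ = {Sum.inl i, Sum.inl j} ∨ τ = {Sum.inl j, Sum.inr i} ∨
       τ = {Sum.inr i, Sum.inr j} ∨ τ = {Sum.inr j, Sum.inl i}) := by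
  intro τ
  rw [← disjoint_toLeft_toRight_and_subset_iff hij, ← Finset.pair_disjSum_pair]
  exact and_congr_left (mem_bier_iff_disjoint_of_subset_disjSum hK hedge hdualedge)

theorem bier_full_subcomplex_four_cycle {m : ℕ} (hm : 2 ≤ m)
    (K : Set (Finset (Fin m))) (hK : IsComplex K) (hKne : K ≠ Set.univ)
    (i j : Fin m) (hij : i ≠ j)
    (hedge : ({i, j} : Finset (Fin m)) ∈ K)
    (hdualedge : ({i, j} : Finset (Fin m))ᶜ ∉ K) :
    ∀ τ : Finset (Fin m ⊕ Fin m),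
      (τ ∈ bier K ∧ τ ⊆ {Sum.inl i, Sum.inl j, Sum.inr i, Sum.inr j}) ↔
      (τ = ∅ ∨
       τ = {Sum.inl i} ∨ τ = {Sum.inl j} ∨ τ = {Sum.inr i} ∨ τ = {Sum.inr j} ∨
       τ = {Sum.inl i, Sum.inl j} ∨ τ = {Sum.inl j, Sum.inr i} ∨
       τ = {Sum.inr i, Sum.inr j} ∨ τ = {Sum.inr j, Sum.inl i}) :=
  bier_full_subcomplex_four_cycle_general K hK i j hij hedge hdualedge
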